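/- (Special case M = ∞: k-support-type identity) When M = ∞, the conjugate of g(β) = min { (1/2)∑_j β_j²/z_j : z ∈ [0,1]^p, 1ᵀz ≤ k } is g*(α) = (1/2)·TopSum_k(α_1², …, α_p²), i.e., half the sum of the k largest squared entries of α. -/

import Mathlib

/-- Sum of the `k` largest components of `c`. -/
noncomputable def topSum {p : ℕ} (k : ℕ) (c : Fin p → ℝ) : ℝ :=
  sSup {x : ℝ | ∃ s : Finset (Fin p), s.card = k ∧ x = ∑ j ∈ s, c j}

/-- Feasibility for the `M = ∞` case: there is `z ∈ [0,1]^p` with `∑ z ≤ k`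
and `zⱼ = 0 → βⱼ = 0` (perspective convention). -/
def FeasInf (p k : ℕ) (β : Fin p → ℝ) : Prop :=
  ∃ z : Fin p → ℝ, (∀ j, z j ∈ Set.Icc (0 : ℝ) 1) ∧ (∑ j, z j) ≤ (k : ℝ) ∧
    ∀ j, z j = 0 → β j = 0

/-- `g(β) = min { (1/2)∑ βⱼ²/zⱼ : z ∈ [0,1]^p, 1ᵀz ≤ k }` for `M = ∞`.
(Perspective convention: `zⱼ = 0` forces `βⱼ = 0`, and then `βⱼ²/zⱼ = 0/0 = 0`
in Lean's real division.) -/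
noncomputable def gInf (p k : ℕ) (β : Fin p → ℝ) : ℝ :=
  sInf {v : ℝ | ∃ z : Fin p → ℝ, (∀ j, z j ∈ Set.Icc (0 : ℝ) 1) ∧
    (∑ j, z j) ≤ (k : ℝ) ∧ (∀ j, z j = 0 → β j = 0) ∧
    v = (1 / 2) * ∑ j, (β j) ^ 2 / z j}

lemma exists_topset {p k : ℕ} (hkp : k ≤ p) (c : Fin p → ℝ) :
    ∃ S : Finset (Fin p), S.card = k ∧
      (∀ s : Finset (Fin p), s.card = k → ∑ j ∈ s, c j ≤ ∑ j ∈ S, c j) ∧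
      (∀ i ∉ S, ∀ j ∈ S, c i ≤ c j) := by
  have hne : (Finset.univ.powersetCard k : Finset (Finset (Fin p))).Nonempty := by
    obtain ⟨t, _, hcard⟩ := Finset.exists_subset_card_eq (s := (Finset.univ : Finset (Fin p))) (n := k)
      (by simpa using hkp)
    exact ⟨t, Finset.mem_powersetCard.mpr ⟨Finset.subset_univ _, hcard⟩⟩
  obtain ⟨S, hSmem, hSmax⟩ := Finset.exists_max_image _ (fun s => ∑ j ∈ s, c j) hne
  have hScard : S.card = k := (Finset.mem_powersetCard.mp hSmem).2
  refine ⟨S, hScard, ?_, ?_⟩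
  · intro s hs
    exact hSmax s (Finset.mem_powersetCard.mpr ⟨Finset.subset_univ _, hs⟩)
  · intro i hi j hj
    have hk1 : 1 ≤ k := hScard ▸ Finset.card_pos.mpr ⟨j, hj⟩
    have hiS' : i ∉ S.erase j := fun h => hi (Finset.mem_of_mem_erase h)
    have hcard' : (insert i (S.erase j)).card = k := by
      rw [Finset.card_insert_of_notMem hiS', Finset.card_erase_of_mem hj, hScard]
      omega
    have hsum' : ∑ x ∈ insert i (S.erase j), c x = c i + (∑ x ∈ S, c x - c j) := by
      rw [Finset.sum_insert hiS', Finset.sum_erase_eq_sub hj]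
    have := hSmax (insert i (S.erase j))
      (Finset.mem_powersetCard.mpr ⟨Finset.subset_univ _, hcard'⟩)
    rw [hsum'] at this
    linarith

lemma sum_mul_le_topset {p : ℕ} (c z : Fin p → ℝ) (hc : ∀ j, 0 ≤ c j)
    (hz : ∀ j, z j ∈ Set.Icc (0:ℝ) 1) (S : Finset (Fin p)) (hSne : S.Nonempty)
    (hzk : (∑ j, z j) ≤ (S.card : ℝ))
    (hdom : ∀ i ∉ S, ∀ j ∈ S, c i ≤ c j) :
    ∑ j, z j * c j ≤ ∑ j ∈ S, c j := by
  obtain ⟨j0, hj0, hmin⟩ := S.exists_min_image c hSne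
  set m := c j0 with hm
  have hm0 : 0 ≤ m := hc j0
  have hsplit : ∑ j ∈ S, z j * c j + ∑ j ∈ Sᶜ, z j * c j = ∑ j, z j * c j :=
    Finset.sum_add_sum_compl S _
  have hsplit2 : ∑ j ∈ S, z j + ∑ j ∈ Sᶜ, z j = ∑ j, z j :=
    Finset.sum_add_sum_compl S _
  have h1 : ∑ j ∈ Sᶜ, z j * c j ≤ m * ∑ j ∈ Sᶜ, z j := by
    rw [Finset.mul_sum]
    apply Finset.sum_le_sum
    intro i hi
    have hiS : i ∉ S := by simpa using hi
    have hd := hdom i hiS j0 hj0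
    have h0 := (hz i).1
    nlinarith
  have h2 : m * ∑ j ∈ Sᶜ, z j ≤ m * ((S.card : ℝ) - ∑ j ∈ S, z j) := by
    apply mul_le_mul_of_nonneg_left _ hm0
    linarith
  have h3 : ∑ j ∈ S, z j * c j + m * ((S.card : ℝ) - ∑ j ∈ S, z j) ≤ ∑ j ∈ S, c j := by
    have heq : ∑ j ∈ S, z j * c j + m * ((S.card : ℝ) - ∑ j ∈ S, z j)
        = ∑ j ∈ S, (z j * c j + m * (1 - z j)) := by
      rw [Finset.sum_add_distrib]
      have : ∑ j ∈ S, m * (1 - z j) = m * ((S.card : ℝ) - ∑ j ∈ S, z j) := by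
        rw [← Finset.mul_sum, Finset.sum_sub_distrib, Finset.sum_const, nsmul_eq_mul, mul_one]
      rw [this]
    rw [heq]
    apply Finset.sum_le_sum
    intro j hj
    have hmj : m ≤ c j := hmin j hj
    have h0 := (hz j).1
    have h1' := (hz j).2
    nlinarith
  linarith

/-- `k`-support-type identity (`M = ∞`): the conjugate of `g` is
`g*(α) = (1/2)·TopSum_k(α₁², …, α_p²)`. -/
theorem conjugate_of_gInf {p k : ℕ} (hk1 : 1 ≤ k) (hkp : k ≤ p)
    (α : Fin p → ℝ) :
    sSup {v : ℝ | ∃ β : Fin p → ℝ, FeasInf p k β ∧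
        v = (∑ j, α j * β j) - gInf p k β}
      = (1 / 2) * topSum k (fun j => (α j) ^ 2) := by
  set c : Fin p → ℝ := fun j => (α j) ^ 2 with hcdef
  obtain ⟨S, hScard, hSmax, hdom⟩ := exists_topset hkp c
  have hc0 : ∀ j, 0 ≤ c j := fun j => sq_nonneg _
  have hSne : S.Nonempty := Finset.card_pos.mp (by omega)
  -- topSum equals the max
  have htop : topSum k c = ∑ j ∈ S, c j := by
    apply le_antisymm
    · have hne : {x : ℝ | ∃ s : Finset (Fin p), s.card = k ∧ x = ∑ j ∈ s, c j}.Nonempty :=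
        ⟨∑ j ∈ S, c j, S, hScard, rfl⟩
      apply csSup_le hne
      rintro x ⟨s, hs, rfl⟩
      exact hSmax s hs
    · exact le_csSup ⟨∑ j ∈ S, c j, by rintro x ⟨s, hs, rfl⟩; exact hSmax s hs⟩
        ⟨S, hScard, rfl⟩
  rw [htop]
  -- upper bound for every element of the LHS set
  have hub : ∀ v ∈ {v : ℝ | ∃ β : Fin p → ℝ, FeasInf p k β ∧
      v = (∑ j, α j * β j) - gInf p k β}, v ≤ (1/2) * ∑ j ∈ S, c j := by
    rintro v ⟨β, ⟨z0, hz0, hz0k, hz00⟩, rfl⟩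
    have hgInf : (∑ j, α j * β j) - (1/2) * ∑ j ∈ S, c j ≤ gInf p k β := by
      have hne2 : {v : ℝ | ∃ z : Fin p → ℝ, (∀ j, z j ∈ Set.Icc (0 : ℝ) 1) ∧
          (∑ j, z j) ≤ (k : ℝ) ∧ (∀ j, z j = 0 → β j = 0) ∧
          v = (1 / 2) * ∑ j, (β j) ^ 2 / z j}.Nonempty :=
        ⟨_, z0, hz0, hz0k, hz00, rfl⟩
      apply le_csInf hne2
      rintro w ⟨z, hz, hzk, hz0', rfl⟩
      have key : ∑ j, α j * β j - (1/2) * ∑ j, (β j)^2 / z j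
          ≤ (1/2) * ∑ j, z j * c j := by
        have hpt : ∀ j, α j * β j - (1/2) * ((β j)^2 / z j) ≤ (1/2) * (z j * c j) := by
          intro j
          rcases eq_or_lt_of_le (hz j).1 with h0 | h0
          · have hβ := hz0' j h0.symm
            simp [hβ, ← h0]
          · have hdivge : 2 * α j * β j - z j * α j ^ 2 ≤ (β j)^2 / z j := by
              rw [le_div_iff₀ h0]
              nlinarith [sq_nonneg (z j * α j - β j)]
            simp only [hcdef]
            nlinarith
        calc ∑ j, α j * β j - (1/2) * ∑ j, (β j)^2 / z j
            = ∑ j, (α j * β j - (1/2) * ((β j)^2 / z j)) := by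
              rw [Finset.sum_sub_distrib, Finset.mul_sum]
          _ ≤ ∑ j, (1/2) * (z j * c j) := Finset.sum_le_sum fun j _ => hpt j
          _ = (1/2) * ∑ j, z j * c j := by rw [Finset.mul_sum]
      have hle := sum_mul_le_topset c z hc0 hz S hSne (by rw [hScard]; exact hzk) hdom
      linarith
    linarith
  -- the optimal element
  set β0 : Fin p → ℝ := fun j => if j ∈ S then α j else 0 with hβ0
  set z0 : Fin p → ℝ := fun j => if j ∈ S then 1 else 0 with hz0def
  have hz0mem : ∀ j, z0 j ∈ Set.Icc (0:ℝ) 1 := by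
    intro j; simp only [hz0def]; split <;> simp
  have hz0sum : (∑ j, z0 j) ≤ (k : ℝ) := by
    simp only [hz0def]
    rw [Finset.sum_ite_mem, Finset.univ_inter, Finset.sum_const, hScard]
    simp
  have hz0supp : ∀ j, z0 j = 0 → β0 j = 0 := by
    intro j h
    simp only [hz0def] at h
    simp only [hβ0]
    split
    · next hmem => simp [hmem] at h
    · rfl
  have hfeas : FeasInf p k β0 := ⟨z0, hz0mem, hz0sum, hz0supp⟩
  have hval : (1/2) * ∑ j, (β0 j)^2 / z0 j = (1/2) * ∑ j ∈ S, c j := by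
    congr 1
    rw [← Finset.sum_add_sum_compl S]
    have h1 : ∑ j ∈ S, (β0 j)^2 / z0 j = ∑ j ∈ S, c j := by
      apply Finset.sum_congr rfl
      intro j hj
      simp [hβ0, hz0def, hj, hcdef]
    have h2 : ∑ j ∈ Sᶜ, (β0 j)^2 / z0 j = 0 := by
      apply Finset.sum_eq_zero
      intro j hj
      have : j ∉ S := by simpa using hj
      simp [hβ0, hz0def, this]
    rw [h1, h2, add_zero]
  have hglow : gInf p k β0 ≤ (1/2) * ∑ j ∈ S, c j := by
    rw [← hval]
    apply csInf_le
    · refine ⟨0, ?_⟩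
      rintro w ⟨z, hz, _, _, rfl⟩
      have : ∀ j, (0:ℝ) ≤ (β0 j)^2 / z j := fun j => div_nonneg (sq_nonneg _) (hz j).1
      exact mul_nonneg (by norm_num) (Finset.sum_nonneg fun j _ => this j)
    · exact ⟨z0, hz0mem, hz0sum, hz0supp, rfl⟩
  have hip : ∑ j, α j * β0 j = ∑ j ∈ S, c j := by
    rw [← Finset.sum_add_sum_compl S]
    have h1 : ∑ j ∈ S, α j * β0 j = ∑ j ∈ S, c j :=
      Finset.sum_congr rfl fun j hj => by simp [hβ0, hj, hcdef, sq]
    have h2 : ∑ j ∈ Sᶜ, α j * β0 j = 0 :=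
      Finset.sum_eq_zero fun j hj => by
        have : j ∉ S := by simpa using hj
        simp [hβ0, this]
    rw [h1, h2, add_zero]
  have hlow : (1/2) * ∑ j ∈ S, c j ≤ (∑ j, α j * β0 j) - gInf p k β0 := by
    rw [hip]; linarith
  apply le_antisymm
  · exact csSup_le ⟨_, β0, hfeas, rfl⟩ hub
  · calc (1/2) * ∑ j ∈ S, c j ≤ (∑ j, α j * β0 j) - gInf p k β0 := hlow
      _ ≤ _ := le_csSup ⟨_, hub⟩ ⟨β0, hfeas, rfl⟩
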